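/- Specialization of the blow-up factor at c=1: for b = i, P = 2iσ and every n with 2n ∈ ℤ, the quantity l_n(P,b)^2 defined by l_n(P,b)^2 = 2^{4n^2}(β^(1))^{-Δ^(1)_n}(β^(2))^{-Δ^(2)_n}/(s_even(2P,2n)·s_even(2P+Q,2n)) satisfies 4^{-Δ^{NS}}·(-1)^{2n}·l_n(2iσ,i)^2 = 1/( ∏_{k=1}^{2|n|-1}(k^2-4σ^2)^{2(2|n|-k)}·(4σ^2)^{2|n|} ), where at b=i: Q=0, β^(1)=β^(2)=1/4, Δ^(1)_n = (σ+n)^2, Δ^(2)_n = (σ-n)^2, Δ^{NS} = 2σ^2. -/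

import Mathlib

/-!
Group the factors of `s_even(x, 2k)` along the even diagonals `i + j = 2l`, `l < k`. At `b = i`
and `x = 2ic` the `l`-th diagonal is `∏_{i ≤ 2l} 2i(c + i - l) = (2i)^{2l+1} c ∏_{j ≤ l}(c² - j²)`,
so `s_even` becomes an explicit product. Since `Q = 0`, both `s_even` factors of `l_n²` agree,
for `n < 0` up to the sign `((-1)^{2n})²` of the reflection, so their product is a square and only
depends on `c² = 4σ²`. The complex powers of `4` and `1/4` collapse to `2^{m²}` because their
exponents add up to `m²/2`.
-/

/-- `s_even(x,n)` for `n ≥ 0`: the product over pairs of nonnegative integers `(i,j)`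
with `i+j < 2n` and `i+j` even of `(x+ib+jb⁻¹)`. -/
noncomputable def sEvenPos (b x : ℂ) (k : ℕ) : ℂ :=
  ∏ i ∈ Finset.range (2 * k), ∏ j ∈ Finset.range (2 * k),
    if i + j < 2 * k ∧ Even (i + j) then x + (i : ℂ) * b + (j : ℂ) * b⁻¹ else 1

/-- `s_even(x,n)` for all `n ∈ ℤ`, defined for `n < 0` by the reflection
`s_even(x,n) = (-1)^n s_even(Q-x,-n)` with `Q = b+b⁻¹`. -/
noncomputable def sEven (b x : ℂ) (n : ℤ) : ℂ :=
  if 0 ≤ n then sEvenPos b x n.toNat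
  else (-1 : ℂ) ^ n * sEvenPos b ((b + b⁻¹) - x) (-n).toNat

open Finset

theorem prod_range_prod_Icc_eq_prod_Icc_pow {M : Type*} [CommMonoid M] (f : ℕ → M) (k : ℕ) :
    ∏ l ∈ range k, ∏ j ∈ Icc 1 l, f j = ∏ j ∈ Icc 1 (k - 1), f j ^ (k - j) := by
  rw [prod_comm' (s' := fun j => Ico j k) (t' := Icc 1 (k - 1)) fun l j => by
    simp only [mem_range, mem_Icc, mem_Ico]; omega]
  exact prod_congr rfl fun j _ => by rw [prod_const, Nat.card_Ico]

theorem prod_range_add_sub_eq_mul_prod_sq_sub {R : Type*} [CommRing R] (c : R) (l : ℕ) :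
    ∏ i ∈ range (2 * l + 1), (c + i - l) = c * ∏ j ∈ Icc 1 l, (c ^ 2 - j ^ 2) := by
  induction l with
  | zero => simp
  | succ l ih =>
    have hshift : ∏ i ∈ range (2 * l + 1), (c + (i + 1 : ℕ) - (l + 1 : ℕ)) =
        ∏ i ∈ range (2 * l + 1), (c + i - l) :=
      prod_congr rfl fun i _ => by push_cast; ring
    rw [show 2 * (l + 1) + 1 = 2 * l + 1 + 1 + 1 by ring, prod_range_succ, prod_range_succ',
      hshift, ih, prod_Icc_succ_top (by omega)]
    push_cast
    ring

theorem sEvenPos_eq_prod_range_prod_antidiagonal (b x : ℂ) (k : ℕ) :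
    sEvenPos b x k = ∏ l ∈ range k, ∏ p ∈ antidiagonal (2 * l), (x + p.1 * b + p.2 * b⁻¹) := by
  rw [sEvenPos, ← prod_product', ← prod_filter,
    ← prod_fiberwise_of_maps_to (g := fun p => (p.1 + p.2) / 2) (t := range k)]
  · refine prod_congr rfl fun l hl => prod_congr ?_ fun _ _ => rfl
    ext ⟨i, j⟩
    simp only [mem_range] at hl
    simp only [mem_filter, mem_product, mem_range, HasAntidiagonal.mem_antidiagonal, Nat.even_iff]
    omega
  · intro p hp
    simp only [mem_filter, mem_product, mem_range, Nat.even_iff] at hp ⊢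
    omega

theorem sum_range_two_mul_add_one (k : ℕ) : ∑ l ∈ range k, (2 * l + 1) = k ^ 2 := by
  induction k with
  | zero => simp
  | succ k ih => rw [sum_range_succ, ih]; ring

theorem prod_antidiagonal_two_mul_I (c : ℂ) (l : ℕ) :
    ∏ p ∈ antidiagonal (2 * l), (2 * Complex.I * c + p.1 * Complex.I + p.2 * Complex.I⁻¹) =
      (2 * Complex.I) ^ (2 * l + 1) * (c * ∏ j ∈ Icc 1 l, (c ^ 2 - j ^ 2)) := by
  have hfactor : ∀ i ∈ range (2 * l + 1),
      2 * Complex.I * c + i * Complex.I + (2 * l - i : ℕ) * Complex.I⁻¹ =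
        2 * Complex.I * (c + i - l) := fun i hi => by
    rw [mem_range] at hi
    rw [Complex.inv_I, Nat.cast_sub (by omega)]
    push_cast
    ring
  rw [Nat.prod_antidiagonal_eq_prod_range_succ_mk, prod_congr rfl hfactor, prod_mul_distrib,
    prod_const, card_range, prod_range_add_sub_eq_mul_prod_sq_sub]

theorem sEvenPos_I (c : ℂ) (k : ℕ) :
    sEvenPos Complex.I (2 * Complex.I * c) k =
      (2 * Complex.I) ^ (k ^ 2) * (c ^ k * ∏ j ∈ Icc 1 (k - 1), (c ^ 2 - j ^ 2) ^ (k - j)) := by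
  simp only [sEvenPos_eq_prod_range_prod_antidiagonal, prod_antidiagonal_two_mul_I,
    prod_mul_distrib, prod_pow_eq_pow_sum, sum_range_two_mul_add_one, prod_const, card_range,
    prod_range_prod_Icc_eq_prod_Icc_pow]

theorem sq_sEvenPos_I (c : ℂ) (k : ℕ) :
    sEvenPos Complex.I (2 * Complex.I * c) k ^ 2 =
      (-4) ^ (k ^ 2) *
        ((∏ j ∈ Icc 1 (k - 1), ((j : ℂ) ^ 2 - c ^ 2) ^ (2 * (k - j))) * (c ^ 2) ^ k) := by
  have h4 : ((2 * Complex.I) ^ (k ^ 2)) ^ 2 = (-4) ^ (k ^ 2) := by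
    rw [pow_right_comm, mul_pow, Complex.I_sq]; norm_num
  have hflip : ∀ j ∈ Icc 1 (k - 1), ((c ^ 2 - j ^ 2) ^ (k - j)) ^ 2 =
      ((j : ℂ) ^ 2 - c ^ 2) ^ (2 * (k - j)) := fun j _ => by
    rw [pow_right_comm, sub_sq_comm, ← pow_mul]
  rw [sEvenPos_I, mul_pow, h4, mul_pow, ← prod_pow, prod_congr rfl hflip, pow_right_comm,
    mul_comm ((c ^ 2) ^ k)]

theorem sEven_I_mul_sEven_I (σ : ℂ) (m : ℤ) :
    sEven Complex.I (2 * (2 * Complex.I * σ)) m *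
        sEven Complex.I (2 * (2 * Complex.I * σ) + (Complex.I + Complex.I⁻¹)) m =
      (-4) ^ (m.natAbs ^ 2) * ((∏ j ∈ Icc 1 (m.natAbs - 1),
        ((j : ℂ) ^ 2 - 4 * σ ^ 2) ^ (2 * (m.natAbs - j))) * (4 * σ ^ 2) ^ m.natAbs) := by
  have hQ : Complex.I + Complex.I⁻¹ = 0 := by rw [Complex.inv_I, add_neg_cancel]
  have hc : (2 * σ) ^ 2 = 4 * σ ^ 2 := by ring
  simp only [sEven, hQ, add_zero, zero_sub]
  split_ifs with hm
  · rw [show m.toNat = m.natAbs by omega, mul_left_comm, ← sq, sq_sEvenPos_I, hc]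
  · have hsign : (-1 : ℂ) ^ m * (-1) ^ m = 1 := by
      rw [← mul_zpow, neg_one_mul, neg_neg, one_zpow]
    rw [show (-m).toNat = m.natAbs by omega, mul_mul_mul_comm, hsign, one_mul,
      show -(2 * (2 * Complex.I * σ)) = 2 * Complex.I * -(2 * σ) by ring, ← sq, sq_sEvenPos_I,
      neg_sq, hc]

theorem neg_one_zpow_eq_pow_natAbs_sq (m : ℤ) : (-1 : ℂ) ^ m = (-1) ^ (m.natAbs ^ 2) := by
  rw [neg_one_zpow_eq_ite, neg_one_pow_eq_ite]
  simp [Nat.even_pow, Int.natAbs_even]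

theorem one_div_four_cpow (z : ℂ) : (1 / 4 : ℂ) ^ z = 4 ^ (-z) := by
  rw [one_div, Complex.inv_cpow _ _ (by simp [Real.pi_ne_zero.symm]), Complex.cpow_neg]

theorem four_cpow (z : ℂ) : (4 : ℂ) ^ z = 2 ^ (2 * z) := by
  rw [Complex.cpow_ofNat_mul' (by simp [Real.pi_pos]) (by simp [Real.pi_nonneg])]
  norm_num

theorem four_cpow_mul_quarter_cpow_mul_quarter_cpow (σ : ℂ) (m : ℤ) :
    (4 : ℂ) ^ (-(2 * σ ^ 2)) * (1 / 4 : ℂ) ^ (-((σ + (m : ℂ) / 2) ^ 2)) *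
      (1 / 4 : ℂ) ^ (-((σ - (m : ℂ) / 2) ^ 2)) = 2 ^ (m.natAbs ^ 2) := by
  have hm : ((m : ℂ)) ^ 2 = ((m.natAbs ^ 2 : ℕ) : ℂ) := by
    rw [← Int.cast_natCast, Nat.cast_pow, Int.natAbs_sq, Int.cast_pow]
  rw [one_div_four_cpow, one_div_four_cpow, neg_neg, neg_neg,
    ← Complex.cpow_add _ _ (by norm_num), ← Complex.cpow_add _ _ (by norm_num), four_cpow,
    show 2 * (-(2 * σ ^ 2) + (σ + m / 2) ^ 2 + (σ - m / 2) ^ 2) = (m : ℂ) ^ 2 by ring, hm,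
    Complex.cpow_natCast]

theorem blowup_factor_specialization_c_one_general (σ : ℂ) (m : ℤ) :
    (4 : ℂ) ^ (-(2 * σ ^ 2)) * (-1 : ℂ) ^ m *
      ((2 : ℂ) ^ (m.natAbs ^ 2) *
        (1 / 4 : ℂ) ^ (-((σ + (m : ℂ) / 2) ^ 2)) *
        (1 / 4 : ℂ) ^ (-((σ - (m : ℂ) / 2) ^ 2)) /
        (sEven Complex.I (2 * (2 * Complex.I * σ)) m *
          sEven Complex.I (2 * (2 * Complex.I * σ) + (Complex.I + Complex.I⁻¹)) m)) =
      1 / ((∏ k ∈ Finset.Icc 1 (m.natAbs - 1),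
          ((k : ℂ) ^ 2 - 4 * σ ^ 2) ^ (2 * (m.natAbs - k))) *
        (4 * σ ^ 2) ^ m.natAbs) := by
  have hnum : (4 : ℂ) ^ (-(2 * σ ^ 2)) * (-1 : ℂ) ^ m *
      ((2 : ℂ) ^ (m.natAbs ^ 2) * (1 / 4 : ℂ) ^ (-((σ + (m : ℂ) / 2) ^ 2)) *
        (1 / 4 : ℂ) ^ (-((σ - (m : ℂ) / 2) ^ 2))) = (-4) ^ (m.natAbs ^ 2) :=
    calc _ = (-1 : ℂ) ^ m * 2 ^ (m.natAbs ^ 2) * ((4 : ℂ) ^ (-(2 * σ ^ 2)) *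
            (1 / 4 : ℂ) ^ (-((σ + (m : ℂ) / 2) ^ 2)) *
            (1 / 4 : ℂ) ^ (-((σ - (m : ℂ) / 2) ^ 2))) := by
          ring
      _ = (-1) ^ (m.natAbs ^ 2) * 2 ^ (m.natAbs ^ 2) * 2 ^ (m.natAbs ^ 2) := by
          rw [four_cpow_mul_quarter_cpow_mul_quarter_cpow, neg_one_zpow_eq_pow_natAbs_sq]
      _ = (-4) ^ (m.natAbs ^ 2) := by rw [← mul_pow, ← mul_pow]; norm_num
  rw [sEven_I_mul_sEven_I, mul_div_assoc', hnum,
    div_mul_cancel_left₀ (pow_ne_zero _ (by norm_num)), one_div]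

/-- **Specialization of the blow-up factor at `c = 1`.** For `b = i`, `P = 2iσ` and every
half-integer `n` (written `n = m/2`, `m ∈ ℤ`), the quantity
`l_n(P,b)² = 2^{4n²}(β⁽¹⁾)^{-Δ⁽¹⁾ₙ}(β⁽²⁾)^{-Δ⁽²⁾ₙ}/(s_even(2P,2n)·s_even(2P+Q,2n))`
satisfies
`4^{-Δᴺˢ}·(-1)^{2n}·l_n(2iσ,i)² = 1/(∏_{k=1}^{2|n|-1}(k²-4σ²)^{2(2|n|-k)}·(4σ²)^{2|n|})`,
where at `b = i`: `Q = 0`, `β⁽¹⁾ = β⁽²⁾ = 1/4`, `Δ⁽¹⁾ₙ = (σ+n)²`, `Δ⁽²⁾ₙ = (σ-n)²`,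
`Δᴺˢ = 2σ²` (so `2^{4n²} = 2^{m²}` and `2|n| = |m|`). -/
theorem blowup_factor_specialization_c_one (σ : ℂ) (hσ : ∀ k : ℤ, 2 * σ ≠ (k : ℂ))
    (m : ℤ) :
    (4 : ℂ) ^ (-(2 * σ ^ 2)) * (-1 : ℂ) ^ m *
      ((2 : ℂ) ^ (m.natAbs ^ 2) *
        (1 / 4 : ℂ) ^ (-((σ + (m : ℂ) / 2) ^ 2)) *
        (1 / 4 : ℂ) ^ (-((σ - (m : ℂ) / 2) ^ 2)) /
        (sEven Complex.I (2 * (2 * Complex.I * σ)) m *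
          sEven Complex.I (2 * (2 * Complex.I * σ) + (Complex.I + Complex.I⁻¹)) m)) =
      1 / ((∏ k ∈ Finset.Icc 1 (m.natAbs - 1),
          ((k : ℂ) ^ 2 - 4 * σ ^ 2) ^ (2 * (m.natAbs - k))) *
        (4 * σ ^ 2) ^ m.natAbs) :=
  blowup_factor_specialization_c_one_general σ m
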